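/- Suppose $f, g : [0,\infty) \to [0,\infty)$ are measurable functions such that $f - g$ changes sign at most $n-1$ times on $(0,\infty)$, and suppose $\int_0^\infty t^{p_i} f(t)\,dt = \int_0^\infty t^{p_i} g(t)\,dt < \infty$ for $n$ distinct exponents $p_1,\ldots,p_n \in (-1,\infty)$. Then $f = g$ almost everywhere. -/

import Mathlib

/-!
Let `k ≤ n - 1` be the number of sign changes of `h = f - g`, at `t₁ < ⋯ < t_k`, and pick `k + 1`
of the exponents. Some nontrivial `φ x = ∑ c_q x ^ q` over these exponents vanishes at every `t_j`
(`k` linear conditions on `k + 1` coefficients). Applying Rolle's theorem to `x ^ (-q₀) φ`, whose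
derivative is `x ^ (-q₀ - 1)` times a sum of one power fewer, shows that a nontrivial sum of `m`
real powers has fewer than `m` positive zeros counted with multiplicity. So `φ` has no further
positive zeros and its zeros are simple: it changes sign exactly where `h` does. Then `φ h` has
constant sign, while `∫ φ h = 0` by the moment conditions; hence `φ h = 0` and `h = 0` a.e.
-/

open Real Set MeasureTheory

theorem exists_disjoint_deriv_zeros_card_le {s : Set ℝ} (hs : s.OrdConnected) {ψ ψ' : ℝ → ℝ}
    (hψ : ∀ x ∈ s, HasDerivAt ψ (ψ' x) x) {S : Finset ℝ} (hS : ∀ x ∈ S, x ∈ s ∧ ψ x = 0) :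
    ∃ S' : Finset ℝ, S.card ≤ S'.card + 1 ∧ Disjoint S S' ∧ ∀ y ∈ S', y ∈ s ∧ ψ' y = 0 := by
  have rolle : ∀ a ∈ S, ∀ b ∈ S, a < b → ∃ z ∈ Ioo a b, ψ' z = 0 := by
    intro a ha b hb hab
    have hIcc : Icc a b ⊆ s := hs.out (hS a ha).1 (hS b hb).1
    exact exists_hasDerivAt_eq_zero hab
      (fun x hx => (hψ x (hIcc hx)).continuousAt.continuousWithinAt)
      (by rw [(hS a ha).2, (hS b hb).2]) (fun x hx => hψ x (hIcc (Ioo_subset_Icc_self hx)))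
  choose! z hz hz' using rolle
  -- the Rolle points of consecutive zeros interleave `S`
  set R := ((S ×ˢ S).filter fun p => p.1 < p.2).image fun p => z p.1 p.2
  refine ⟨R \ S, Finset.card_le_sdiff_of_interleaved fun a ha b hb hab _ => ?_,
    Finset.disjoint_sdiff, fun y hy => ?_⟩
  · exact ⟨z a b, Finset.mem_image.mpr
      ⟨(a, b), Finset.mem_filter.mpr ⟨Finset.mem_product.mpr ⟨ha, hb⟩, hab⟩, rfl⟩, hz a ha b hb hab⟩
  · obtain ⟨⟨a, b⟩, hab, rfl⟩ := Finset.mem_image.mp (Finset.mem_sdiff.mp hy).1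
    simp only [Finset.mem_filter, Finset.mem_product] at hab
    obtain ⟨⟨ha, hb⟩, hab⟩ := hab
    exact ⟨hs.out (hS a ha).1 (hS b hb).1 (Ioo_subset_Icc_self (hz a ha b hb hab)),
      hz' a ha b hb hab⟩

theorem IsPreconnected.exists_forall_pos_mul {s : Set ℝ} (hs : IsPreconnected s) {φ : ℝ → ℝ}
    (hφ : ContinuousOn φ s) (hne : ∀ x ∈ s, φ x ≠ 0) : ∃ σ : ℝ, ∀ x ∈ s, 0 < σ * φ x := by
  rcases s.eq_empty_or_nonempty with rfl | ⟨x₀, hx₀⟩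
  · exact ⟨0, by simp⟩
  refine ⟨φ x₀, fun x hx => ?_⟩
  by_contra! hle
  obtain ⟨y, hy, hy0⟩ : ∃ y ∈ s, φ y = 0 := by
    rcases mul_nonpos_iff.mp hle with ⟨h₀, h⟩ | ⟨h₀, h⟩
    · exact hs.intermediate_value hx hx₀ hφ ⟨h, h₀⟩
    · exact hs.intermediate_value hx₀ hx hφ ⟨h₀, h⟩
  exact hne y hy hy0

theorem HasDerivAt.dslope_of_eq_zero {φ : ℝ → ℝ} {a t d : ℝ} (h : HasDerivAt φ d t) (hta : t ≠ a)
    (ha : φ a = 0) (ht : φ t = 0) : HasDerivAt (dslope φ a) ((t - a)⁻¹ * d) t := by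
  have hquot := (((hasDerivAt_id t).sub_const a).inv (sub_ne_zero.mpr hta)).mul h
  rw [ht, mul_zero, zero_add] at hquot
  refine hquot.congr_of_eventuallyEq ?_
  filter_upwards [eventually_ne_nhds hta] with x hx
  rw [dslope_of_ne _ hx, slope_def_field, ha, sub_zero, div_eq_inv_mul]
  rfl

theorem IsPreconnected.exists_forall_pos_mul_neg_one_pow_mul {s : Set ℝ} (hs : IsPreconnected s)
    (T : Finset ℝ) {φ φ' : ℝ → ℝ} (hcont : ContinuousOn φ s)
    (hzero : ∀ t ∈ T, φ t = 0 ∧ HasDerivAt φ (φ' t) t ∧ φ' t ≠ 0)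
    (hne : ∀ x ∈ s, x ∉ T → φ x ≠ 0) :
    ∃ σ : ℝ, ∀ x ∈ s, x ∉ T → 0 < σ * ((-1) ^ (T.filter (· < x)).card * φ x) := by
  induction T using Finset.induction_on generalizing φ φ' with
  | empty => simpa using hs.exists_forall_pos_mul hcont fun x hx => hne x hx (Finset.notMem_empty x)
  | insert a T haT ih =>
  obtain ⟨hφa, hφ'a, hφ'a0⟩ := hzero a (Finset.mem_insert_self a T)
  -- divide out the zero at `a`: `φ x = (x - a) * dslope φ a x`
  obtain ⟨σ, hσ⟩ := ih (φ := dslope φ a) (φ' := fun t => (t - a)⁻¹ * φ' t)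
    (fun x hx => by
      by_cases hxa : x = a
      · subst hxa
        exact (continuousAt_dslope_same.mpr hφ'a.differentiableAt).continuousWithinAt
      · exact (continuousWithinAt_dslope_of_ne hxa).mpr (hcont x hx))
    (fun t ht => by
      have hta : t ≠ a := fun h => haT (h ▸ ht)
      obtain ⟨hφt, hφ't, hφ't0⟩ := hzero t (Finset.mem_insert_of_mem ht)
      refine ⟨?_, hφ't.dslope_of_eq_zero hta hφa hφt, mul_ne_zero (by simpa [sub_eq_zero]) hφ't0⟩
      rw [dslope_of_ne _ hta, slope_def_field, hφt, hφa, sub_self, zero_div])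
    (fun x hx hxT => by
      by_cases hxa : x = a
      · rwa [hxa, dslope_same, hφ'a.deriv]
      · rw [dslope_of_ne _ hxa, slope_def_field, hφa, sub_zero]
        exact div_ne_zero (hne x hx (by simp [hxa, hxT])) (sub_ne_zero.mpr hxa))
  refine ⟨-σ, fun x hx hxT => ?_⟩
  have hxa : x ≠ a := fun h => hxT (h ▸ Finset.mem_insert_self a T)
  have hfac : φ x = (x - a) * dslope φ a x := by simpa [hφa] using (sub_smul_dslope φ a x).symm
  have hpos := hσ x hx fun h => hxT (Finset.mem_insert_of_mem h)
  rw [Finset.filter_insert, hfac]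
  by_cases hax : a < x
  · rw [if_pos hax, Finset.card_insert_of_notMem (by simp [haT]), pow_succ]
    nlinarith [sub_pos.mpr hax]
  · rw [if_neg hax]
    nlinarith [sub_pos.mpr (lt_of_le_of_ne (not_lt.mp hax) hxa)]

noncomputable def rpowSum (Q : Finset ℝ) (c : ℝ → ℝ) (x : ℝ) : ℝ := ∑ q ∈ Q, c q * x ^ q

section rpowSum

variable {Q : Finset ℝ} {c : ℝ → ℝ} {x : ℝ}

theorem rpowSum_erase {q₀ : ℝ} (h : c q₀ = 0) : rpowSum (Q.erase q₀) c = rpowSum Q c := by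
  funext x
  exact Finset.sum_erase _ (by simp [h])

theorem rpowSum_eq_single {q₀ : ℝ} (hq₀ : q₀ ∈ Q) (h : ∀ q ∈ Q, q ≠ q₀ → c q = 0) :
    rpowSum Q c x = c q₀ * x ^ q₀ :=
  Finset.sum_eq_single_of_mem q₀ hq₀ fun q hq hne => by simp [h q hq hne]

theorem rpowSum_sub_mul (q₀ : ℝ) :
    rpowSum Q (fun q => (q - q₀) * c q) x =
      rpowSum Q (fun q => q * c q) x - q₀ * rpowSum Q c x := by
  simp only [rpowSum, Finset.mul_sum, ← Finset.sum_sub_distrib]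
  exact Finset.sum_congr rfl fun q _ => by ring

theorem hasDerivAt_rpowSum (hx : 0 < x) :
    HasDerivAt (rpowSum Q c) (x⁻¹ * rpowSum Q (fun q => q * c q) x) x := by
  refine (HasDerivAt.fun_sum (u := Q) fun q _ =>
    (hasDerivAt_rpow_const (p := q) (Or.inl hx.ne')).const_mul (c q)).congr_deriv ?_
  simp only [rpowSum, Finset.mul_sum, rpow_sub_one hx.ne']
  exact Finset.sum_congr rfl fun q _ => by field_simp

theorem hasDerivAt_rpowSum_mul_rpow (q₀ : ℝ) (hx : 0 < x) :
    HasDerivAt (fun y => rpowSum Q c y * y ^ (-q₀))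
      (x ^ (-q₀ - 1) * rpowSum Q (fun q => (q - q₀) * c q) x) x := by
  refine ((hasDerivAt_rpowSum hx).mul
    (hasDerivAt_rpow_const (p := -q₀) (Or.inl hx.ne'))).congr_deriv ?_
  rw [rpowSum_sub_mul, rpow_sub_one hx.ne']
  field_simp
  ring

theorem continuousOn_rpowSum : ContinuousOn (rpowSum Q c) (Ioi 0) := fun _ hx =>
  (hasDerivAt_rpowSum hx).continuousAt.continuousWithinAt

end rpowSum

theorem exists_rpowSum_eq_zero {Q T : Finset ℝ} (h : T.card < Q.card) :
    ∃ c : ℝ → ℝ, (∃ q ∈ Q, c q ≠ 0) ∧ ∀ x ∈ T, rpowSum Q c x = 0 := by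
  let M : Matrix T Q ℝ := fun x q => (x : ℝ) ^ (q : ℝ)
  have hker : LinearMap.ker M.mulVecLin ≠ ⊥ :=
    LinearMap.ker_ne_bot_of_finrank_lt (by simpa using h)
  obtain ⟨v, hv, hv0⟩ := (Submodule.ne_bot_iff _).mp hker
  obtain ⟨q, hq⟩ := Function.ne_iff.mp hv0
  refine ⟨fun r => if hr : r ∈ Q then v ⟨r, hr⟩ else 0, ⟨q, q.2, by simpa using hq⟩, fun x hx => ?_⟩
  have hx0 := congrFun (LinearMap.mem_ker.mp hv) ⟨x, hx⟩
  simp only [M, Pi.zero_apply] at hx0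
  rw [rpowSum, ← Finset.sum_coe_sort Q, ← hx0]
  exact Finset.sum_congr rfl fun r _ => by simp [mul_comm]

theorem card_add_card_lt_card_of_rpowSum_eq_zero {Q : Finset ℝ} {c : ℝ → ℝ} {S D : Finset ℝ}
    (hc : ∃ q ∈ Q, c q ≠ 0) (hS : ∀ x ∈ S, 0 < x ∧ rpowSum Q c x = 0) (hDS : D ⊆ S)
    (hD : ∀ x ∈ D, deriv (rpowSum Q c) x = 0) : S.card + D.card < Q.card := by
  induction Q using Finset.strongInduction generalizing c S D with
  | H Q ih =>
  obtain ⟨q₀, hq₀, hcq₀⟩ := hc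
  by_cases hmono : ∀ q ∈ Q, q ≠ q₀ → c q = 0
  · have hS₀ : S = ∅ := Finset.eq_empty_of_forall_notMem fun x hx => by
      have hx0 := hS x hx
      rw [rpowSum_eq_single hq₀ hmono] at hx0
      exact mul_ne_zero hcq₀ (rpow_pos_of_pos hx0.1 _).ne' hx0.2
    subst hS₀
    rw [Finset.subset_empty.mp hDS]
    simpa using Finset.card_pos.mpr ⟨q₀, hq₀⟩
  push Not at hmono
  obtain ⟨q₁, hq₁, hq₁₀, hcq₁⟩ := hmono
  set c' : ℝ → ℝ := fun q => (q - q₀) * c q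
  -- `(x ^ (-q₀) φ)' = x ^ (-q₀ - 1) χ` with `χ = rpowSum Q c'`, and `c' q₀ = 0`.
  obtain ⟨S', hSS', hdisj, hS'⟩ := exists_disjoint_deriv_zeros_card_le ordConnected_Ioi
    (fun x hx => hasDerivAt_rpowSum_mul_rpow q₀ hx)
    (fun x hx => ⟨(hS x hx).1, show rpowSum Q c x * x ^ (-q₀) = 0 by rw [(hS x hx).2, zero_mul]⟩)
  have hχS' : ∀ y ∈ S', 0 < y ∧ rpowSum Q c' y = 0 := fun y hy =>
    ⟨(hS' y hy).1, (mul_eq_zero.mp (hS' y hy).2).resolve_left (rpow_pos_of_pos (hS' y hy).1 _).ne'⟩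
  have hχD : ∀ y ∈ D, 0 < y ∧ rpowSum Q c' y = 0 := by
    intro y hy
    obtain ⟨hy0, hφy⟩ := hS y (hDS hy)
    have hderiv := (hasDerivAt_rpowSum (c := c) (Q := Q) hy0).deriv
    rw [hD y hy, zero_eq_mul] at hderiv
    refine ⟨hy0, ?_⟩
    rw [rpowSum_sub_mul, hφy, hderiv.resolve_left (inv_ne_zero hy0.ne'), mul_zero, sub_zero]
  have hlt := ih (Q.erase q₀) (Finset.erase_ssubset hq₀) (c := c') (S := S' ∪ D) (D := ∅)
    ⟨q₁, Finset.mem_erase.mpr ⟨hq₁₀, hq₁⟩, mul_ne_zero (sub_ne_zero.mpr hq₁₀) hcq₁⟩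
    (by
      rw [rpowSum_erase (by simp [c'])]
      intro y hy
      rcases Finset.mem_union.mp hy with hy | hy
      exacts [hχS' y hy, hχD y hy])
    (Finset.empty_subset _) (by simp)
  rw [Finset.card_union_of_disjoint (Finset.disjoint_of_subset_right hDS hdisj.symm),
    Finset.card_erase_of_mem hq₀] at hlt
  omega

theorem exists_rpowSum_sign_pattern {Q T : Finset ℝ} (hT : ∀ t ∈ T, 0 < t)
    (hcard : Q.card = T.card + 1) :
    ∃ c : ℝ → ℝ, ∃ σ : ℝ, ∀ x ∈ Ioi (0 : ℝ), x ∉ T →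
      0 < σ * ((-1) ^ (T.filter (· < x)).card * rpowSum Q c x) := by
  obtain ⟨c, hc, hcT⟩ := exists_rpowSum_eq_zero (by omega : T.card < Q.card)
  refine ⟨c, isPreconnected_Ioi.exists_forall_pos_mul_neg_one_pow_mul T continuousOn_rpowSum
    (φ' := fun t => t⁻¹ * rpowSum Q (fun q => q * c q) t) (fun t ht => ?_) fun x hx hxT hx0 => ?_⟩
  · have hderiv := hasDerivAt_rpowSum (Q := Q) (c := c) (hT t ht)
    refine ⟨hcT t ht, hderiv, fun h0 => ?_⟩
    have := card_add_card_lt_card_of_rpowSum_eq_zero hc (fun x hx => ⟨hT x hx, hcT x hx⟩)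
      (Finset.singleton_subset_iff.mpr ht) (by simpa [hderiv.deriv] using h0)
    simp only [Finset.card_singleton] at this
    omega
  · have := card_add_card_lt_card_of_rpowSum_eq_zero (S := insert x T) (D := ∅) hc
      (fun y hy => by
        rcases Finset.mem_insert.mp hy with rfl | hy
        exacts [⟨hx, hx0⟩, ⟨hT y hy, hcT y hy⟩]) (Finset.empty_subset _) (by simp)
    rw [Finset.card_insert_of_notMem hxT] at this
    simp only [Finset.card_empty] at this
    omega

theorem integral_rpowSum_mul_eq_zero {α : Type*} [MeasurableSpace α] {μ : Measure α}
    {Q : Finset ℝ} (c : ℝ → ℝ) {w h : α → ℝ}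
    (hint : ∀ q ∈ Q, Integrable (fun x => w x ^ q * h x) μ)
    (hzero : ∀ q ∈ Q, ∫ x, w x ^ q * h x ∂μ = 0) :
    Integrable (fun x => rpowSum Q c (w x) * h x) μ ∧ ∫ x, rpowSum Q c (w x) * h x ∂μ = 0 := by
  have hsum : (fun x => rpowSum Q c (w x) * h x) = fun x => ∑ q ∈ Q, c q * (w x ^ q * h x) := by
    funext x
    simp only [rpowSum, Finset.sum_mul, mul_assoc]
  rw [hsum, integral_finsetSum _ fun q hq => (hint q hq).const_mul _]
  exact ⟨integrable_finsetSum _ fun q hq => (hint q hq).const_mul _,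
    Finset.sum_eq_zero fun q hq => by rw [integral_const_mul, hzero q hq, mul_zero]⟩

theorem ae_eq_zero_of_integral_mul_eq_zero {α : Type*} [MeasurableSpace α] {μ : Measure α}
    {v u : α → ℝ} (hv : ∀ᵐ x ∂μ, 0 < v x) (hu : ∀ᵐ x ∂μ, 0 ≤ u x)
    (hint : Integrable (fun x => v x * u x) μ) (h0 : ∫ x, v x * u x ∂μ = 0) : u =ᵐ[μ] 0 := by
  have hvu := (integral_eq_zero_iff_of_nonneg_ae
    (by filter_upwards [hv, hu] with x hvx hux using mul_nonneg hvx.le hux) hint).mp h0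
  filter_upwards [hvu, hv] with x hx hvx
  exact (mul_eq_zero.mp hx).resolve_left hvx.ne'

theorem ae_eq_zero_of_integral_rpow_mul_eq_zero {h : ℝ → ℝ} {Q T : Finset ℝ}
    (hT : ∀ t ∈ T, 0 < t) (hQ : Q.card = T.card + 1)
    (hint : ∀ q ∈ Q, IntegrableOn (fun x => x ^ q * h x) (Ioi 0))
    (hzero : ∀ q ∈ Q, ∫ x in Ioi 0, x ^ q * h x = 0) {ε : ℝ} (hε : ε ≠ 0)
    (hsign : ∀ x ∈ Ioi (0 : ℝ), x ∉ T → 0 ≤ ε * (-1) ^ (T.filter (· < x)).card * h x) :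
    h =ᵐ[volume.restrict (Ioi 0)] 0 := by
  obtain ⟨c, σ, hσ⟩ := exists_rpowSum_sign_pattern hT hQ
  obtain ⟨hφint, hφ0⟩ := integral_rpowSum_mul_eq_zero c hint hzero
  set N : ℝ → ℕ := fun x => (T.filter (· < x)).card
  have hoffT : ∀ᵐ x ∂volume.restrict (Ioi (0 : ℝ)), 0 < x ∧ x ∉ T :=
    (ae_restrict_mem measurableSet_Ioi).and
      (ae_restrict_of_ae (measure_eq_zero_iff_ae_notMem.mp (T.finite_toSet.measure_zero _)))
  have hvu : (fun x => σ * ((-1) ^ N x * rpowSum Q c x) * (ε * (-1) ^ N x * h x))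
      = fun x => σ * ε * (rpowSum Q c x * h x) := by
    funext x
    have hsq : (-1 : ℝ) ^ N x * (-1) ^ N x = 1 := by rw [← mul_pow]; norm_num
    linear_combination σ * ε * rpowSum Q c x * h x * hsq
  have hu := ae_eq_zero_of_integral_mul_eq_zero (u := fun x => ε * (-1) ^ N x * h x)
    (by filter_upwards [hoffT] with x hx using hσ x hx.1 hx.2)
    (by filter_upwards [hoffT] with x hx using hsign x hx.1 hx.2)
    (by rw [hvu]; exact hφint.const_mul _) (by rw [hvu, integral_const_mul, hφ0, mul_zero])
  filter_upwards [hu] with x hx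
  exact (mul_eq_zero.mp hx).resolve_left (mul_ne_zero hε (pow_ne_zero _ (by norm_num)))

theorem stmt_3_general (n : ℕ) (hn : 1 ≤ n) (f g : ℝ → ℝ)
    (p : Fin n → ℝ) (hpdist : Function.Injective p)
    -- the difference `f - g` changes sign at most `n-1` times on `(0,∞)`:
    (hsign : ∃ k : ℕ, k ≤ n - 1 ∧ ∃ t : Fin k → ℝ, StrictMono t ∧ (∀ j, 0 < t j) ∧
      ∃ ε : ℝ, (ε = 1 ∨ ε = -1) ∧ ∀ x ∈ Set.Ioi (0:ℝ), (∀ j, x ≠ t j) →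
        0 ≤ ε * (-1 : ℝ) ^ ((Finset.univ.filter fun j : Fin k => t j < x).card) * (f x - g x))
    (hint : ∀ i, IntegrableOn (fun x => x ^ (p i) * f x) (Set.Ioi 0) volume ∧
      IntegrableOn (fun x => x ^ (p i) * g x) (Set.Ioi 0) volume)
    (heq : ∀ i, ∫ x in Set.Ioi (0:ℝ), x ^ (p i) * f x = ∫ x in Set.Ioi (0:ℝ), x ^ (p i) * g x) :
    f =ᵐ[volume.restrict (Set.Ici (0:ℝ))] g := by
  obtain ⟨k, hk, t, ht, ht0, ε, hε, hsgn⟩ := hsign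
  set T := Finset.univ.image t
  obtain ⟨Q, hQp, hQ⟩ := Finset.exists_subset_card_eq (s := Finset.univ.image p) (n := T.card + 1)
    (by
      simp only [T, Finset.card_image_of_injective _ hpdist,
        Finset.card_image_of_injective _ ht.injective, Finset.card_univ, Fintype.card_fin]
      omega)
  have hfg := ae_eq_zero_of_integral_rpow_mul_eq_zero (h := f - g) (ε := ε)
    (by simpa [T] using ht0) hQ
    (fun q hq => by
      obtain ⟨i, -, rfl⟩ := Finset.mem_image.mp (hQp hq)
      simp only [Pi.sub_apply, mul_sub]
      exact (hint i).1.sub (hint i).2)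
    (fun q hq => by
      obtain ⟨i, -, rfl⟩ := Finset.mem_image.mp (hQp hq)
      simp only [Pi.sub_apply, mul_sub]
      rw [integral_sub (hint i).1 (hint i).2, heq i, sub_self])
    (by rcases hε with rfl | rfl <;> norm_num)
    (fun x hx hxT => by
      rw [Finset.filter_image, Finset.card_image_of_injective _ ht.injective]
      exact hsgn x hx fun j h => hxT (by simp [T, h]))
  rw [← restrict_Ioi_eq_restrict_Ici]
  filter_upwards [hfg] with x hx
  exact sub_eq_zero.mp hx

/-- If two nonnegative measurable functions on `[0,∞)` whose difference changes sign at most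
`n-1` times on `(0,∞)` have the same (finite) `pᵢ`-th moments for `n` distinct exponents
`pᵢ ∈ (-1,∞)`, then they are equal almost everywhere. -/
theorem stmt_3 (n : ℕ) (hn : 1 ≤ n) (f g : ℝ → ℝ)
    (hf : Measurable f) (hg : Measurable g)
    (hf0 : ∀ x, 0 ≤ f x) (hg0 : ∀ x, 0 ≤ g x)
    (p : Fin n → ℝ) (hpdist : Function.Injective p) (hp : ∀ i, -1 < p i)
    -- the difference `f - g` changes sign at most `n-1` times on `(0,∞)`:
    (hsign : ∃ k : ℕ, k ≤ n - 1 ∧ ∃ t : Fin k → ℝ, StrictMono t ∧ (∀ j, 0 < t j) ∧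
      ∃ ε : ℝ, (ε = 1 ∨ ε = -1) ∧ ∀ x ∈ Set.Ioi (0:ℝ), (∀ j, x ≠ t j) →
        0 ≤ ε * (-1 : ℝ) ^ ((Finset.univ.filter fun j : Fin k => t j < x).card) * (f x - g x))
    (hint : ∀ i, IntegrableOn (fun x => x ^ (p i) * f x) (Set.Ioi 0) volume ∧
      IntegrableOn (fun x => x ^ (p i) * g x) (Set.Ioi 0) volume)
    (heq : ∀ i, ∫ x in Set.Ioi (0:ℝ), x ^ (p i) * f x = ∫ x in Set.Ioi (0:ℝ), x ^ (p i) * g x) :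
    f =ᵐ[volume.restrict (Set.Ici (0:ℝ))] g :=
  stmt_3_general n hn f g p hpdist hsign hint heq
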